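/- For N ≥ 2, the estimator Ṽ₂ = (2N/(2N−1)) · (V₂ + (s² + s'²)/(4N)), where V₂ = N⁻¹ ∑_{n=1}^N f(Xₙ) f(X'ₙ) − ((μ̂ + μ̂')/2)², is unbiased: E[Ṽ₂] = σ_Y². -/

import Mathlib

/-!
Write `a = f(X)`, `b = f(X')`. Conditional independence and equality of the conditional laws
give `E[a b] = E[E[a | 𝓖]²]`: for bounded `f` this is immediate from the tower property, and
the general case follows by truncating `f`, since conditional expectation is an `L²`
contraction. Hence `Cov(a, b) = Var(E[a | 𝓖]) = σ_Y²`.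

On the sample side `Ṽ₂` is a quadratic statistic of the i.i.d. pairs `(aₙ, bₙ)`; from
`E[(N⁻¹ ∑ zₙ)²] = Var z / N + (E z)²` and the unbiasedness of `s²` one gets
`E[V₂ + (s² + s'²)/(4N)] = (1 - 1/(2N)) Cov(a, b)` as soon as `E a = E b`, and the factor
`2N/(2N - 1)` removes the bias.
-/

open MeasureTheory ProbabilityTheory Filter
open scoped Topology ENNReal

namespace MeasureTheory

variable {α ι β : Type*} {m m₀ : MeasurableSpace α} {μ : Measure α}

lemma unifIntegrable_of_norm_le [NormedAddCommGroup β] {p : ℝ≥0∞} {f : ι → α → β} {g : α → β}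
    (hp : 1 ≤ p) (hp' : p ≠ ∞) (hg : MemLp g p μ) (hfg : ∀ i x, ‖f i x‖ ≤ ‖g x‖) :
    UnifIntegrable f p μ := by
  intro ε hε
  obtain ⟨δ, hδ, h⟩ := unifIntegrable_const (ι := ι) hp hp' hg hε
  refine ⟨δ, hδ, fun i s hs hμs => le_trans (eLpNorm_mono fun x => ?_) (h i s hs hμs)⟩
  by_cases hx : x ∈ s <;> simp [hx, hfg i x]

lemma tendsto_eLpNorm_truncation_sub [IsFiniteMeasure μ] {p : ℝ≥0∞} (hp : 1 ≤ p) (hp' : p ≠ ∞)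
    {U : α → ℝ} (hU : MemLp U p μ) :
    Tendsto (fun k : ℕ => eLpNorm (truncation U k - U) p μ) atTop (𝓝 0) := by
  refine tendsto_Lp_finite_of_tendsto_ae hp hp' (fun k => hU.1.truncation) hU
    (unifIntegrable_of_norm_le hp hp' hU fun k x => abs_truncation_le_abs_self U k x)
    (ae_of_all _ fun x => tendsto_const_nhds.congr' ?_)
  filter_upwards [tendsto_natCast_atTop_atTop.eventually_gt_atTop |U x|] with k hk
  exact (truncation_eq_self hk).symm

lemma MemLp.integral_mul_eq_inner {u v : α → ℝ} (hu : MemLp u 2 μ) (hv : MemLp v 2 μ) :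
    ∫ x, u x * v x ∂μ = inner ℝ hu.toLp hv.toLp := by
  rw [L2.inner_def]
  refine integral_congr_ae ?_
  filter_upwards [hu.coeFn_toLp, hv.coeFn_toLp] with x hux hvx
  simp [hux, hvx, mul_comm]

lemma tendsto_integral_mul_of_tendsto_eLpNorm {u v : ℕ → α → ℝ} {u₀ v₀ : α → ℝ}
    (hu : ∀ k, MemLp (u k) 2 μ) (hv : ∀ k, MemLp (v k) 2 μ)
    (hu₀ : MemLp u₀ 2 μ) (hv₀ : MemLp v₀ 2 μ)
    (hu_lim : Tendsto (fun k => eLpNorm (u k - u₀) 2 μ) atTop (𝓝 0))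
    (hv_lim : Tendsto (fun k => eLpNorm (v k - v₀) 2 μ) atTop (𝓝 0)) :
    Tendsto (fun k => ∫ x, u k x * v k x ∂μ) atTop (𝓝 (∫ x, u₀ x * v₀ x ∂μ)) := by
  simp only [fun k => (hu k).integral_mul_eq_inner (hv k), hu₀.integral_mul_eq_inner hv₀]
  exact ((Lp.tendsto_Lp_iff_tendsto_eLpNorm'' u hu u₀ hu₀).mpr hu_lim).inner
    ((Lp.tendsto_Lp_iff_tendsto_eLpNorm'' v hv v₀ hv₀).mpr hv_lim)

lemma tendsto_eLpNorm_condExp_sub {p : ℝ≥0∞} (hp : 1 ≤ p) {u : ℕ → α → ℝ} {u₀ : α → ℝ}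
    (hu : ∀ k, Integrable (u k) μ) (hu₀ : Integrable u₀ μ)
    (hlim : Tendsto (fun k => eLpNorm (u k - u₀) p μ) atTop (𝓝 0)) :
    Tendsto (fun k => eLpNorm (μ[u k|m] - μ[u₀|m]) p μ) atTop (𝓝 0) := by
  refine tendsto_of_tendsto_of_tendsto_of_le_of_le tendsto_const_nhds hlim (fun k => zero_le)
    fun k => ?_
  rw [← eLpNorm_congr_ae (condExp_sub (hu k) hu₀ m)]
  exact eLpNorm_condExp_le_eLpNorm _ hp

lemma integral_mul_eq_integral_condExp_sq (hm : m ≤ m₀) [SigmaFinite (μ.trim hm)] {U V : α → ℝ}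
    (hprod : μ[fun x => U x * V x|m] =ᵐ[μ] fun x => μ[U|m] x * μ[V|m] x)
    (hsame : μ[U|m] =ᵐ[μ] μ[V|m]) :
    ∫ x, U x * V x ∂μ = ∫ x, μ[U|m] x ^ 2 ∂μ := by
  rw [← integral_condExp hm]
  refine integral_congr_ae ?_
  filter_upwards [hprod, hsame] with x hx hx'
  rw [hx, ← hx', sq]

lemma integral_mul_eq_integral_condExp_sq_of_truncation [IsFiniteMeasure μ] {U V : α → ℝ}
    (hU : MemLp U 2 μ) (hV : MemLp V 2 μ)
    (htrunc : ∀ k : ℕ, ∫ x, truncation U k x * truncation V k x ∂μ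
      = ∫ x, μ[truncation U k|m] x ^ 2 ∂μ) :
    ∫ x, U x * V x ∂μ = ∫ x, μ[U|m] x ^ 2 ∂μ := by
  have hUk : ∀ k : ℕ, MemLp (truncation U k) 2 μ := fun k => hU.1.memLp_truncation
  have hU_lim := tendsto_eLpNorm_truncation_sub one_le_two ENNReal.ofNat_ne_top hU
  have hV_lim := tendsto_eLpNorm_truncation_sub one_le_two ENNReal.ofNat_ne_top hV
  have hcond_lim := tendsto_eLpNorm_condExp_sub (m := m) one_le_two
    (fun k => (hUk k).integrable one_le_two) (hU.integrable one_le_two) hU_lim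
  have hcondU := hU.condExp (m := m) one_le_two
  have hcondUk := fun k => (hUk k).condExp (m := m) one_le_two
  refine tendsto_nhds_unique ((tendsto_integral_mul_of_tendsto_eLpNorm hUk
    (fun k => hV.1.memLp_truncation) hU hV hU_lim hV_lim).congr htrunc) ?_
  simpa only [sq] using
    tendsto_integral_mul_of_tendsto_eLpNorm hcondUk hcondUk hcondU hcondU hcond_lim hcond_lim

end MeasureTheory

namespace ProbabilityTheory

section Sample

variable {Ω ι : Type*} [Fintype ι]

noncomputable section

def sampleMean (z : ι → Ω → ℝ) (ω : Ω) : ℝ :=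
  (Fintype.card ι : ℝ)⁻¹ * ∑ i, z i ω

-- For a single observation the prefactor is `0⁻¹ = 0`.
def sampleVariance (z : ι → Ω → ℝ) (ω : Ω) : ℝ :=
  ((Fintype.card ι : ℝ) - 1)⁻¹ * ∑ i, (z i ω - sampleMean z ω) ^ 2

def correctedV2 (a b : ι → Ω → ℝ) (ω : Ω) : ℝ :=
  2 * Fintype.card ι / (2 * Fintype.card ι - 1)
    * ((sampleMean (fun i ω => a i ω * b i ω) ω - ((sampleMean a ω + sampleMean b ω) / 2) ^ 2)
      + (sampleVariance a ω + sampleVariance b ω) / (4 * Fintype.card ι))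

end

lemma sum_sub_sampleMean_sq [Nonempty ι] (z : ι → Ω → ℝ) (ω : Ω) :
    ∑ i, (z i ω - sampleMean z ω) ^ 2
      = ∑ i, z i ω ^ 2 - (Fintype.card ι : ℝ)⁻¹ * (∑ i, z i ω) ^ 2 := by
  have hn : (Fintype.card ι : ℝ) ≠ 0 := by simp
  simp only [sampleMean, sub_sq, Finset.sum_add_distrib, Finset.sum_sub_distrib,
    ← Finset.sum_mul, ← Finset.mul_sum, Finset.sum_const, Finset.card_univ, nsmul_eq_mul]
  field_simp
  ring

lemma correctedV2_eq (a b : ι → Ω → ℝ) (ω : Ω) :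
    correctedV2 a b ω = 2 * Fintype.card ι / (2 * Fintype.card ι - 1)
      * ((sampleMean (fun i ω => a i ω * b i ω) ω
          - sampleMean (fun i ω => a i ω + b i ω) ω ^ 2 / 4)
        + (sampleVariance a ω + sampleVariance b ω) / (4 * Fintype.card ι)) := by
  simp only [correctedV2, sampleMean, Finset.sum_add_distrib]
  ring

variable [MeasurableSpace Ω] {μ : Measure Ω} {z : ι → Ω → ℝ} {Z : Ω → ℝ}

lemma integrable_sampleMean (hz : ∀ i, Integrable (z i) μ) : Integrable (sampleMean z) μ :=
  (integrable_finsetSum _ fun i _ => hz i).const_mul _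

lemma memLp_sampleMean {p : ℝ≥0∞} (hz : ∀ i, MemLp (z i) p μ) : MemLp (sampleMean z) p μ :=
  (memLp_finsetSum _ fun i _ => hz i).const_mul _

lemma integrable_sampleVariance (hz : ∀ i, MemLp (z i) 2 μ) : Integrable (sampleVariance z) μ :=
  (integrable_finsetSum _ fun i _ =>
    ((hz i).sub (memLp_sampleMean hz)).integrable_sq).const_mul _

lemma integral_sum_of_identDistrib (hZ : Integrable Z μ) (hid : ∀ i, IdentDistrib (z i) Z μ μ) :
    ∫ ω, ∑ i, z i ω ∂μ = Fintype.card ι * ∫ ω, Z ω ∂μ := by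
  rw [integral_finsetSum _ fun i _ => (hid i).integrable_iff.mpr hZ]
  simp [(hid _).integral_eq]

lemma integral_sampleMean [Nonempty ι] (hZ : Integrable Z μ)
    (hid : ∀ i, IdentDistrib (z i) Z μ μ) :
    ∫ ω, sampleMean z ω ∂μ = ∫ ω, Z ω ∂μ := by
  simp [sampleMean, integral_const_mul, integral_sum_of_identDistrib hZ hid]

variable [IsProbabilityMeasure μ]

lemma integral_sum_sq_of_iIndepFun (hZ : MemLp Z 2 μ) (hid : ∀ i, IdentDistrib (z i) Z μ μ)
    (hind : iIndepFun z μ) :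
    ∫ ω, (∑ i, z i ω) ^ 2 ∂μ
      = Fintype.card ι * variance Z μ + (Fintype.card ι * ∫ ω, Z ω ∂μ) ^ 2 := by
  have hz : ∀ i, MemLp (z i) 2 μ := fun i => (hid i).memLp_iff.mpr hZ
  have hvar := IndepFun.variance_sum (s := Finset.univ) (fun i _ => hz i)
    fun i _ j _ hij => hind.indepFun hij
  rw [variance_eq_sub (memLp_finsetSum' _ fun i _ => hz i)] at hvar
  simp only [(hid _).variance_eq, Finset.sum_const, Finset.card_univ, nsmul_eq_mul,
    Finset.sum_apply, Pi.pow_apply] at hvar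
  rw [← integral_sum_of_identDistrib (hZ.integrable one_le_two) hid]
  linarith

lemma integral_sampleMean_sq [Nonempty ι] (hZ : MemLp Z 2 μ)
    (hid : ∀ i, IdentDistrib (z i) Z μ μ) (hind : iIndepFun z μ) :
    ∫ ω, sampleMean z ω ^ 2 ∂μ = variance Z μ / Fintype.card ι + (∫ ω, Z ω ∂μ) ^ 2 := by
  have hn : (Fintype.card ι : ℝ) ≠ 0 := by simp
  simp only [sampleMean, mul_pow, integral_const_mul, integral_sum_sq_of_iIndepFun hZ hid hind]
  field_simp

lemma integral_sampleVariance (hι : 1 < Fintype.card ι) (hZ : MemLp Z 2 μ)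
    (hid : ∀ i, IdentDistrib (z i) Z μ μ) (hind : iIndepFun z μ) :
    ∫ ω, sampleVariance z ω ∂μ = variance Z μ := by
  have : Nonempty ι := Fintype.card_pos_iff.mp (by omega)
  have hn : (Fintype.card ι : ℝ) - 1 ≠ 0 := by
    rw [sub_ne_zero]; exact_mod_cast hι.ne'
  have hz : ∀ i, MemLp (z i) 2 μ := fun i => (hid i).memLp_iff.mpr hZ
  have hsq : ∀ i, IdentDistrib (fun ω => z i ω ^ 2) (fun ω => Z ω ^ 2) μ μ := fun i => (hid i).sq
  simp only [sampleVariance, sum_sub_sampleMean_sq, integral_const_mul]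
  rw [integral_sub (integrable_finsetSum _ fun i _ => (hz i).integrable_sq)
      (((memLp_finsetSum _ fun i _ => hz i).integrable_sq).const_mul _),
    integral_const_mul, integral_sum_sq_of_iIndepFun hZ hid hind,
    integral_sum_of_identDistrib hZ.integrable_sq hsq, variance_eq_sub hZ]
  simp only [Pi.pow_apply]
  field_simp
  ring

theorem integral_correctedV2 {a b : ι → Ω → ℝ} {A B : Ω → ℝ} (hι : 1 < Fintype.card ι)
    (hA : MemLp A 2 μ) (hB : MemLp B 2 μ)
    (hid : ∀ i, IdentDistrib (fun ω => (a i ω, b i ω)) (fun ω => (A ω, B ω)) μ μ)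
    (hind : iIndepFun (fun i ω => (a i ω, b i ω)) μ) (hmean : ∫ ω, A ω ∂μ = ∫ ω, B ω ∂μ) :
    ∫ ω, correctedV2 a b ω ∂μ = cov[A, B; μ] := by
  have : Nonempty ι := Fintype.card_pos_iff.mp (by omega)
  have hcomp : ∀ φ : ℝ × ℝ → ℝ, Measurable φ →
      (∀ i, IdentDistrib (fun ω => φ (a i ω, b i ω)) (fun ω => φ (A ω, B ω)) μ μ)
        ∧ iIndepFun (fun i ω => φ (a i ω, b i ω)) μ := fun φ hφ =>
    ⟨fun i => (hid i).comp hφ, hind.comp _ fun _ => hφ⟩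
  obtain ⟨ha_id, ha_ind⟩ := hcomp Prod.fst measurable_fst
  obtain ⟨hb_id, hb_ind⟩ := hcomp Prod.snd measurable_snd
  obtain ⟨hw_id, hw_ind⟩ := hcomp (fun t => t.1 + t.2) (by fun_prop)
  have hab_id := (hcomp (fun t => t.1 * t.2) (by fun_prop)).1
  simp only at ha_id ha_ind hb_id hb_ind hw_id hw_ind hab_id
  have hAB := integrable_sampleMean fun i => (hab_id i).integrable_iff.mpr (hA.integrable_mul hB)
  have hW := (memLp_sampleMean fun i => (hw_id i).memLp_iff.mpr (hA.add hB)).integrable_sq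
  have hVa := integrable_sampleVariance fun i => (ha_id i).memLp_iff.mpr hA
  have hVb := integrable_sampleVariance fun i => (hb_id i).memLp_iff.mpr hB
  simp only [correctedV2_eq]
  rw [integral_const_mul, integral_add ?_ ?_, integral_sub ?_ ?_, integral_div, integral_div,
    integral_add hVa hVb,
    integral_sampleMean (Z := fun ω => A ω * B ω) (hA.integrable_mul hB) hab_id,
    integral_sampleMean_sq (Z := fun ω => A ω + B ω) (hA.add hB) hw_id hw_ind,
    integral_sampleVariance hι hA ha_id ha_ind, integral_sampleVariance hι hB hb_id hb_ind]
  any_goals fun_prop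
  have hvar : Var[fun ω => A ω + B ω; μ] = Var[A; μ] + 2 * cov[A, B; μ] + Var[B; μ] :=
    variance_add hA hB
  have hmoment : ∫ ω, A ω * B ω ∂μ = cov[A, B; μ] + (∫ ω, A ω ∂μ) * ∫ ω, B ω ∂μ := by
    rw [covariance_eq_sub hA hB]; simp
  have hn : (2 : ℝ) ≤ Fintype.card ι := by exact_mod_cast hι
  have h2n : 2 * (Fintype.card ι : ℝ) - 1 ≠ 0 := by linarith
  rw [hmoment, hvar, integral_add (hA.integrable one_le_two) (hB.integrable one_le_two), hmean]
  field_simp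
  ring

end Sample

section CondIndep

variable {Ω F : Type*} {m : MeasurableSpace Ω} [mΩ : MeasurableSpace Ω] [MeasurableSpace F]
  {P : Measure Ω} {X X' : Ω → F}

lemma identDistrib_of_forall_integral_eq [IsFiniteMeasure P] (hX : Measurable X)
    (hX' : Measurable X')
    (h : ∀ g : F → ℝ, Measurable g → (∃ C, ∀ x, |g x| ≤ C) →
      ∫ ω, g (X ω) ∂P = ∫ ω, g (X' ω) ∂P) :
    IdentDistrib X X' P P where
  aemeasurable_fst := hX.aemeasurable
  aemeasurable_snd := hX'.aemeasurable
  map_eq := by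
    ext s hs
    have hs_ind := h (s.indicator 1) (measurable_one.indicator hs)
      ⟨1, fun x => by by_cases hx : x ∈ s <;> simp [hx]⟩
    simp only [← Set.indicator_comp_right, Pi.one_comp, integral_indicator_one (hX hs),
      integral_indicator_one (hX' hs)] at hs_ind
    rw [Measure.map_apply hX hs, Measure.map_apply hX' hs]
    exact (measureReal_eq_measureReal_iff (measure_ne_top _ _) (measure_ne_top _ _)).mp hs_ind

theorem covariance_eq_variance_condExp_of_condIndep (hm : m ≤ mΩ) [IsProbabilityMeasure P]
    {f : F → ℝ} (hf : Measurable f) (hL2 : MemLp (fun ω => f (X ω)) 2 P)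
    (hlaw : IdentDistrib X X' P P)
    (hCondIndep : ∀ g : F → ℝ, Measurable g → (∃ C, ∀ x, |g x| ≤ C) →
      P[fun ω => g (X ω) * g (X' ω)|m]
        =ᵐ[P] fun ω => P[fun ω' => g (X ω')|m] ω * P[fun ω' => g (X' ω')|m] ω)
    (hSameCondDist : ∀ g : F → ℝ, Measurable g → (∃ C, ∀ x, |g x| ≤ C) →
      P[fun ω => g (X ω)|m] =ᵐ[P] P[fun ω => g (X' ω)|m]) :
    cov[fun ω => f (X ω), fun ω => f (X' ω); P] = Var[P[fun ω => f (X ω)|m]; P] := by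
  have hlawf : IdentDistrib (fun ω => f (X ω)) (fun ω => f (X' ω)) P P := hlaw.comp hf
  have hL2' : MemLp (fun ω => f (X' ω)) 2 P := hlawf.memLp_iff.mp hL2
  have hmoment : ∫ ω, f (X ω) * f (X' ω) ∂P = ∫ ω, P[fun ω => f (X ω)|m] ω ^ 2 ∂P := by
    refine integral_mul_eq_integral_condExp_sq_of_truncation hL2 hL2' fun k => ?_
    have hgk : Measurable (truncation f k) := (measurable_id.indicator measurableSet_Ioc).comp hf
    have hgk_bdd : ∃ C, ∀ x, |truncation f k x| ≤ C := ⟨|(k : ℝ)|, abs_truncation_le_bound f k⟩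
    exact integral_mul_eq_integral_condExp_sq hm (hCondIndep _ hgk hgk_bdd)
      (hSameCondDist _ hgk hgk_bdd)
  rw [covariance_eq_sub hL2 hL2', variance_eq_sub (hL2.condExp one_le_two),
    integral_condExp hm, ← hlawf.integral_eq]
  simp only [Pi.mul_apply, Pi.pow_apply, hmoment, sq]

end CondIndep

end ProbabilityTheory

open ProbabilityTheory

theorem corrected_estimator_V2_unbiased_general
    {Ω E F : Type*} (𝓖 : MeasurableSpace Ω)
    [MeasurableSpace Ω] [MeasurableSpace E] [MeasurableSpace F]
    (P : Measure Ω) [IsProbabilityMeasure P]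
    (Y : Ω → E) (X X' : Ω → F) (f : F → ℝ)
    (hY : Measurable Y) (hX : Measurable X) (hX' : Measurable X') (hf : Measurable f)
    (hL2 : MemLp (fun ω => f (X ω)) 2 P) (hL2' : MemLp (fun ω => f (X' ω)) 2 P)
    (h𝓖 : 𝓖 = MeasurableSpace.comap Y inferInstance)
    -- conditional independence of `X` and `X'` given `𝓖 = σ(Y)`
    (hCondIndep : ∀ g h : F → ℝ, Measurable g → Measurable h →
      (∃ C, ∀ x, |g x| ≤ C) → (∃ C, ∀ x, |h x| ≤ C) →
      P[(fun ω => g (X ω) * h (X' ω))|𝓖]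
        =ᵐ[P] fun ω => ((P[(fun ω' => g (X ω'))|𝓖]) ω) * ((P[(fun ω' => h (X' ω'))|𝓖]) ω))
    -- `X` and `X'` have the same conditional distribution given `𝓖`
    (hSameCondDist : ∀ g : F → ℝ, Measurable g → (∃ C, ∀ x, |g x| ≤ C) →
      P[(fun ω => g (X ω))|𝓖] =ᵐ[P] P[(fun ω => g (X' ω))|𝓖])
    (σY2 : ℝ)
    (hσY2 : σY2 = variance (P[(fun ω => f (X ω))|𝓖]) P)
    (N : ℕ) (hN : 2 ≤ N)
    -- i.i.d. sample triples `(Yₙ, Xₙ, X'ₙ)` with the same joint distribution as `(Y, X, X')`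
    (Ys : Fin N → Ω → E) (Xs Xs' : Fin N → Ω → F)
    (hYs : ∀ n, Measurable (Ys n)) (hXs : ∀ n, Measurable (Xs n)) (hXs' : ∀ n, Measurable (Xs' n))
    (hIndep : iIndepFun (fun n ω => (Ys n ω, Xs n ω, Xs' n ω)) P)
    (hIdent : ∀ n, Measure.map (fun ω => (Ys n ω, Xs n ω, Xs' n ω)) P
        = Measure.map (fun ω => (Y ω, X ω, X' ω)) P)
    (muHat muHat' : Ω → ℝ)
    (hmuHat : ∀ ω, muHat ω = (N : ℝ)⁻¹ * ∑ n, f (Xs n ω))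
    (hmuHat' : ∀ ω, muHat' ω = (N : ℝ)⁻¹ * ∑ n, f (Xs' n ω))
    (s2 s2' : Ω → ℝ)
    (hs2 : ∀ ω, s2 ω = ((N : ℝ) - 1)⁻¹ * ∑ n, (f (Xs n ω) - muHat ω) ^ 2)
    (hs2' : ∀ ω, s2' ω = ((N : ℝ) - 1)⁻¹ * ∑ n, (f (Xs' n ω) - muHat' ω) ^ 2)
    :
    ∫ ω, (2 * (N : ℝ) / (2 * (N : ℝ) - 1))
        * (((N : ℝ)⁻¹ * ∑ n, f (Xs n ω) * f (Xs' n ω) - ((muHat ω + muHat' ω) / 2) ^ 2)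
          + (s2 ω + s2' ω) / (4 * (N : ℝ))) ∂P = σY2 := by
  have hle : 𝓖 ≤ ‹MeasurableSpace Ω› := h𝓖 ▸ hY.comap_le
  have hlaw : IdentDistrib X X' P P :=
    identDistrib_of_forall_integral_eq hX hX' fun g hg hg_bdd => by
      rw [← integral_condExp hle, integral_congr_ae (hSameCondDist g hg hg_bdd), integral_condExp hle]
  have hTs : ∀ n, IdentDistrib (fun ω => (Ys n ω, Xs n ω, Xs' n ω))
      (fun ω => (Y ω, X ω, X' ω)) P P := fun n => ⟨by fun_prop, by fun_prop, hIdent n⟩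
  have hpair : Measurable fun t : E × F × F => (f t.2.1, f t.2.2) := by fun_prop
  calc _ = ∫ ω, correctedV2 (fun n ω => f (Xs n ω)) (fun n ω => f (Xs' n ω)) ω ∂P := by
        simp only [correctedV2, sampleVariance, sampleMean, hs2, hs2', hmuHat, hmuHat',
          Fintype.card_fin]
    _ = cov[fun ω => f (X ω), fun ω => f (X' ω); P] :=
        integral_correctedV2 (by simp; omega) hL2 hL2' (fun n => (hTs n).comp hpair)
          (hIndep.comp _ fun _ => hpair) (hlaw.comp hf).integral_eq
    _ = σY2 := by
      rw [hσY2, covariance_eq_variance_condExp_of_condIndep hle hf hL2 hlaw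
        (fun g hg hg_bdd => hCondIndep g g hg hg hg_bdd hg_bdd) hSameCondDist]

/-- `Ṽ₂ = (2N/(2N-1)) (V₂ + (s² + s'²)/(4N))` is unbiased: `E[Ṽ₂] = σ_Y²`. -/
theorem corrected_estimator_V2_unbiased
    {Ω E F : Type*} (𝓖 : MeasurableSpace Ω)
    [MeasurableSpace Ω] [MeasurableSpace E] [MeasurableSpace F]
    (P : Measure Ω) [IsProbabilityMeasure P]
    (Y : Ω → E) (X X' : Ω → F) (f : F → ℝ)
    (hY : Measurable Y) (hX : Measurable X) (hX' : Measurable X') (hf : Measurable f)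
    (hL2 : MemLp (fun ω => f (X ω)) 2 P) (hL2' : MemLp (fun ω => f (X' ω)) 2 P)
    (h𝓖 : 𝓖 = MeasurableSpace.comap Y inferInstance)
    -- conditional independence of `X` and `X'` given `𝓖 = σ(Y)`
    (hCondIndep : ∀ g h : F → ℝ, Measurable g → Measurable h →
      (∃ C, ∀ x, |g x| ≤ C) → (∃ C, ∀ x, |h x| ≤ C) →
      P[(fun ω => g (X ω) * h (X' ω))|𝓖]
        =ᵐ[P] fun ω => ((P[(fun ω' => g (X ω'))|𝓖]) ω) * ((P[(fun ω' => h (X' ω'))|𝓖]) ω))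
    -- `X` and `X'` have the same conditional distribution given `𝓖`
    (hSameCondDist : ∀ g : F → ℝ, Measurable g → (∃ C, ∀ x, |g x| ≤ C) →
      P[(fun ω => g (X ω))|𝓖] =ᵐ[P] P[(fun ω => g (X' ω))|𝓖])
    (μ σ2 σY2 : ℝ) (hμ : μ = ∫ ω, f (X ω) ∂P)
    (hσ2 : σ2 = variance (fun ω => f (X ω)) P)
    (hσY2 : σY2 = variance (P[(fun ω => f (X ω))|𝓖]) P)
    (N : ℕ) (hN : 2 ≤ N)
    -- i.i.d. sample triples `(Yₙ, Xₙ, X'ₙ)` with the same joint distribution as `(Y, X, X')`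
    (Ys : Fin N → Ω → E) (Xs Xs' : Fin N → Ω → F)
    (hYs : ∀ n, Measurable (Ys n)) (hXs : ∀ n, Measurable (Xs n)) (hXs' : ∀ n, Measurable (Xs' n))
    (hIndep : iIndepFun (fun n ω => (Ys n ω, Xs n ω, Xs' n ω)) P)
    (hIdent : ∀ n, Measure.map (fun ω => (Ys n ω, Xs n ω, Xs' n ω)) P
        = Measure.map (fun ω => (Y ω, X ω, X' ω)) P)
    (muHat muHat' : Ω → ℝ)
    (hmuHat : ∀ ω, muHat ω = (N : ℝ)⁻¹ * ∑ n, f (Xs n ω))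
    (hmuHat' : ∀ ω, muHat' ω = (N : ℝ)⁻¹ * ∑ n, f (Xs' n ω))
    (s2 s2' : Ω → ℝ)
    (hs2 : ∀ ω, s2 ω = ((N : ℝ) - 1)⁻¹ * ∑ n, (f (Xs n ω) - muHat ω) ^ 2)
    (hs2' : ∀ ω, s2' ω = ((N : ℝ) - 1)⁻¹ * ∑ n, (f (Xs' n ω) - muHat' ω) ^ 2)
    :
    ∫ ω, (2 * (N : ℝ) / (2 * (N : ℝ) - 1))
        * (((N : ℝ)⁻¹ * ∑ n, f (Xs n ω) * f (Xs' n ω) - ((muHat ω + muHat' ω) / 2) ^ 2)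
          + (s2 ω + s2' ω) / (4 * (N : ℝ))) ∂P = σY2 :=
  corrected_estimator_V2_unbiased_general 𝓖 P Y X X' f hY hX hX' hf hL2 hL2' h𝓖 hCondIndep
    hSameCondDist σY2 hσY2 N hN Ys Xs Xs' hYs hXs hXs' hIndep hIdent muHat muHat' hmuHat hmuHat' s2
    s2' hs2 hs2'
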